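/- Let P be a q-exact cone decomposition of a graded K-subspace T ⊆ F with Macaulay constants b_0,...,b_{n+1}. Then for all z ≥ b_0, the Hilbert function of T equals HF_T(z) = binomial(z − b_{n+1} + n, n) − 1 − Σ_{i=1}^n binomial(z − b_i + i − 1, i). -/

import Mathlib

open MvPolynomial

noncomputable section

variable (K : Type*) [Field K]

/-- The free module `F = S e₁ ⊕ ⋯ ⊕ S eₘ` over `S = K[x₁,…,xₙ]`, realized as `Fin m → S`. -/
abbrev FreeMod (n m : ℕ) := Fin m → MvPolynomial (Fin n) K

/-- The monomial `x^d · e_j` of the free module. -/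
def mval {n m : ℕ} (p : Fin m × (Fin n →₀ ℕ)) : FreeMod K n m :=
  Pi.single p.1 (monomial p.2 (1 : K))

/-- Degree of the monomial `x^d e_j` relative to basis degrees `e`. -/
def mdeg {n m : ℕ} (e : Fin m → ℕ) (p : Fin m × (Fin n →₀ ℕ)) : ℕ :=
  (p.2.sum fun _ k => k) + e p.1

/-- The degree-`z` homogeneous component of the graded free module (as a `K`-subspace). -/
def degComp (n m : ℕ) (e : Fin m → ℕ) (z : ℕ) : Submodule K (FreeMod K n m) :=
  Submodule.span K { f | ∃ p : Fin m × (Fin n →₀ ℕ), mdeg e p = z ∧ f = mval K p }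

/-- The cone `h·K[u]`: the `K`-span of the products of `h` with monomials in the variables `u`. -/
def cone {n m : ℕ} (h : FreeMod K n m) (u : Set (Fin n)) : Submodule K (FreeMod K n m) :=
  Submodule.span K
    { f | ∃ d : Fin n →₀ ℕ, ↑d.support ⊆ u ∧ f = (monomial d (1 : K)) • h }

/-- Data of a cone: a pivot, a set of variables, and the degree of the pivot. -/
abbrev ConeData (K : Type*) [Field K] (n m : ℕ) :=
  (FreeMod K n m) × Finset (Fin n) × ℕ

/-- `P` is a cone decomposition of the `K`-subspace `T ⊆ F`: pivots are nonzero homogeneous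
of the recorded degree, and `T` is the internal direct sum of the cones of `P`. -/
def IsConeDecomp {n m : ℕ} (e : Fin m → ℕ) (P : Finset (ConeData K n m))
    (T : Submodule K (FreeMod K n m)) : Prop :=
  (∀ c ∈ P, c.1 ≠ 0 ∧ c.1 ∈ degComp K n m e c.2.2) ∧
  iSupIndep (fun c : P => cone K c.1.1 ↑c.1.2.1) ∧
  (⨆ c : P, cone K c.1.1 ↑c.1.2.1) = T

/-- `P` is `q`-standard. -/
def IsStandard {n m : ℕ} (q : ℕ) (P : Finset (ConeData K n m)) : Prop :=
  (∀ c ∈ P, 0 < c.2.1.card → q ≤ c.2.2) ∧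
  (∀ c ∈ P, 0 < c.2.1.card → ∀ d, q ≤ d → d ≤ c.2.2 →
    ∃ c' ∈ P, c'.2.2 = d ∧ c.2.1.card ≤ c'.2.1.card)

/-- `P` is `q`-exact: `q`-standard and the positive-dimensional cones have distinct degrees. -/
def IsExact {n m : ℕ} (q : ℕ) (P : Finset (ConeData K n m)) : Prop :=
  IsStandard K q P ∧
  ∀ c ∈ P, ∀ c' ∈ P, 0 < c.2.1.card → 0 < c'.2.1.card → c ≠ c' → c.2.2 ≠ c'.2.2

/-- The Macaulay constants `b k = max({q} ∪ {1 + deg C : C ∈ P, dim C ≥ k})`. -/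
def macaulay {n m : ℕ} (q : ℕ) (P : Finset (ConeData K n m)) (k : ℕ) : ℕ :=
  max q ((P.filter fun c => k ≤ c.2.1.card).sup fun c => c.2.2 + 1)

/-- The Hilbert function of a graded `K`-subspace `T ⊆ F`. -/
def hilb {n m : ℕ} (e : Fin m → ℕ) (T : Submodule K (FreeMod K n m)) (z : ℕ) : ℕ :=
  Module.finrank K ↥(T ⊓ degComp K n m e z)

/-- The set of monomials (with their positions) appearing in `f ∈ F`. -/
def suppM {n m : ℕ} (f : FreeMod K n m) : Finset (Fin m × (Fin n →₀ ℕ)) :=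
  Finset.univ.biUnion fun j => (f j).support.image fun d => (j, d)

/-- `p` is the leading monomial of `f` with respect to the monomial order `mo`. -/
def IsLM {n m : ℕ} (mo : LinearOrder (Fin m × (Fin n →₀ ℕ))) (f : FreeMod K n m)
    (p : Fin m × (Fin n →₀ ℕ)) : Prop :=
  p ∈ suppM K f ∧ ∀ p' ∈ suppM K f, mo.le p' p

/-- The initial module of `M` w.r.t. the monomial order `mo`. -/
def initMod {n m : ℕ} (mo : LinearOrder (Fin m × (Fin n →₀ ℕ)))
    (M : Submodule (MvPolynomial (Fin n) K) (FreeMod K n m)) :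
    Submodule (MvPolynomial (Fin n) K) (FreeMod K n m) :=
  Submodule.span _ { f | ∃ g ∈ M, ∃ p, IsLM K mo g p ∧ f = mval K p }

/-- `G` is a Gröbner basis of `M` w.r.t. `mo`. -/
def IsGB {n m : ℕ} (mo : LinearOrder (Fin m × (Fin n →₀ ℕ)))
    (G : Set (FreeMod K n m))
    (M : Submodule (MvPolynomial (Fin n) K) (FreeMod K n m)) : Prop :=
  G ⊆ M ∧
  Submodule.span (MvPolynomial (Fin n) K)
      { f | ∃ g ∈ G, ∃ p, IsLM K mo g p ∧ f = mval K p } = initMod K mo M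

/-- `mo` is a monomial order: compatible with multiplication and monomials of `S` are ≻ 1. -/
def IsMonomialOrder {n m : ℕ} (mo : LinearOrder (Fin m × (Fin n →₀ ℕ))) : Prop :=
  (∀ a b : Fin m × (Fin n →₀ ℕ), ∀ γ : Fin n →₀ ℕ,
      mo.lt a b → mo.lt (a.1, a.2 + γ) (b.1, b.2 + γ)) ∧
  (∀ (j : Fin m) (α γ : Fin n →₀ ℕ), γ ≠ 0 → mo.lt (j, α) (j, α + γ))

/-- `G` is the reduced Gröbner basis of `M` w.r.t. `mo`. -/
def IsReducedGB {n m : ℕ} (mo : LinearOrder (Fin m × (Fin n →₀ ℕ)))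
    (G : Set (FreeMod K n m))
    (M : Submodule (MvPolynomial (Fin n) K) (FreeMod K n m)) : Prop :=
  IsGB K mo G M ∧ (0 : FreeMod K n m) ∉ G ∧
  (∀ g ∈ G, ∀ p, IsLM K mo g p → (g p.1).coeff p.2 = 1) ∧
  (∀ g ∈ G, ∀ g' ∈ G, g ≠ g' → ∀ q ∈ suppM K g, ∀ p, IsLM K mo g' p →
    ¬ (p.1 = q.1 ∧ p.2 ≤ q.2))

/-- The zeroth Fitting ideal of `F/M`: the ideal of `m × m` minors of a presentation matrix,
equivalently generated by determinants of matrices whose columns lie in `M`. -/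
def fitt0 {n m : ℕ} (M : Submodule (MvPolynomial (Fin n) K) (FreeMod K n m)) :
    Ideal (MvPolynomial (Fin n) K) :=
  Ideal.span { p | ∃ A : Matrix (Fin m) (Fin m) (MvPolynomial (Fin n) K),
    (∀ i, (fun j => A j i) ∈ M) ∧ p = A.det }

end

/-! Projecting onto the degree-`z` component preserves every cone, so `T_z` is the direct sum of
the degree-`z` parts of the cones, and the degree-`z` part of `h·K[u]` has basis `x^d h`, `x^d`
running over the monomials in `u` of degree `z - deg h`. Hence
`HF_T(z) = ∑_C binom(dim C + z - deg C - 1, z - deg C)`. For `z ≥ b₀` the zero-dimensional cones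
contribute nothing, and exactness says that the degrees of the `k`-dimensional cones are exactly
`b_{k+1}, …, b_k - 1`; the hockey-stick identity sums them to
`binom(z - b_{k+1} + k, k) - binom(z - b_k + k, k)`, and Pascal's rule telescopes the sum over `k`. -/

open Module Finset

theorem LinearMap.IsProj.inf_eq_map {R M : Type*} [Ring R] [AddCommGroup M] [Module R M]
    {W N : Submodule R M} {π : M →ₗ[R] M} (hπ : LinearMap.IsProj W π) (hN : N.map π ≤ N) :
    N ⊓ W = N.map π := by
  refine le_antisymm (fun x ⟨hxN, hxW⟩ => ⟨x, hxN, hπ.map_id x hxW⟩) (le_inf hN ?_)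
  rintro _ ⟨x, -, rfl⟩
  exact hπ.map_mem x

theorem iSupIndep.finrank_iSup {R M ι : Type*} [DivisionRing R] [AddCommGroup M] [Module R M]
    [Fintype ι] {N : ι → Submodule R M} [∀ i, FiniteDimensional R (N i)]
    (hN : iSupIndep N) : finrank R ↥(⨆ i, N i) = ∑ i, finrank R (N i) := by
  classical
  rw [Submodule.iSup_eq_range_dfinsupp_lsum, LinearMap.finrank_range_of_inj
    hN.dfinsupp_lsum_injective]
  exact finrank_directSum R fun i => N i


theorem sum_Ico_choose_eq (k z : ℕ) {a b : ℕ} (hab : a ≤ b) (hbz : b ≤ z) :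
    ∑ d ∈ Ico a b, ((z - d + k).choose k : ℤ) =
      (z - a + (k + 1)).choose (k + 1) - (z - b + (k + 1)).choose (k + 1) := by
  induction b, hab using Nat.le_induction with
  | base => simp
  | succ b hab ih =>
    obtain ⟨w, hw⟩ : ∃ w, z - b = w + 1 := ⟨z - b - 1, by omega⟩
    rw [sum_Ico_succ_top hab, ih (by omega), hw, show z - (b + 1) = w by omega,
      show w + 1 + (k + 1) = (w + k + 1) + 1 by omega, Nat.choose_succ_succ',
      show w + 1 + k = w + k + 1 by omega, show w + (k + 1) = w + k + 1 by omega]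
    push_cast
    ring

theorem sum_range_choose_telescope (b : ℕ → ℕ) (z n : ℕ) :
    ∑ j ∈ range n, (((z - b (j + 2) + (j + 1)).choose (j + 1) : ℤ) -
        (z - b (j + 1) + (j + 1)).choose (j + 1)) =
      ((z - b (n + 1) + n).choose n : ℤ) - 1 -
        ∑ i ∈ Icc 1 n, ((z - b i + i - 1).choose i : ℤ) := by
  induction n with
  | zero => simp
  | succ n ih =>
    rw [sum_range_succ, ih, sum_Icc_succ_top (by omega), show z - b (n + 1) + (n + 1) - 1 =
      z - b (n + 1) + n by omega, show z - b (n + 1) + (n + 1) = z - b (n + 1) + n + 1 by omega,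
      Nat.choose_succ_succ']
    push_cast
    ring

noncomputable section

variable {K : Type*} [Field K] {n m : ℕ}

def monomialBasis (K : Type*) [Field K] (n m : ℕ) :
    Basis (Fin m × (Fin n →₀ ℕ)) K (FreeMod K n m) :=
  (Pi.basis fun _ : Fin m => MvPolynomial.basisMonomials (Fin n) K).reindex
    (Equiv.sigmaEquivProd (Fin m) (Fin n →₀ ℕ))

theorem monomialBasis_apply (p : Fin m × (Fin n →₀ ℕ)) : monomialBasis K n m p = mval K p := by
  rw [monomialBasis, Basis.reindex_apply, Pi.basis_apply]
  rfl

theorem degComp_eq_span (e : Fin m → ℕ) (z : ℕ) :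
    degComp K n m e z = Submodule.span K (monomialBasis K n m '' {p | mdeg e p = z}) := by
  rw [degComp]
  congr 1
  ext f
  simp [monomialBasis_apply, eq_comm]

def degProj (e : Fin m → ℕ) (z : ℕ) : FreeMod K n m →ₗ[K] FreeMod K n m :=
  (monomialBasis K n m).constr K fun p => if mdeg e p = z then mval K p else 0

theorem degProj_monomialBasis (e : Fin m → ℕ) (z : ℕ) (p : Fin m × (Fin n →₀ ℕ)) :
    degProj e z (monomialBasis K n m p) = if mdeg e p = z then mval K p else 0 :=
  Basis.constr_basis _ _ _ _

theorem isProj_degProj (e : Fin m → ℕ) (z : ℕ) :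
    LinearMap.IsProj (degComp K n m e z) (degProj (K := K) e z) where
  map_mem f := by
    have hrange : LinearMap.range (degProj (K := K) (n := n) e z) ≤ degComp K n m e z := by
      rw [degProj, Basis.constr_range, Submodule.span_le]
      rintro _ ⟨p, rfl⟩
      dsimp only
      split_ifs with hp
      · exact Submodule.subset_span ⟨p, hp, rfl⟩
      · exact Submodule.zero_mem _
    exact hrange (LinearMap.mem_range_self _ f)
  map_id f hf := by
    rw [degComp_eq_span] at hf
    refine (Submodule.span_le (p := LinearMap.eqLocus (degProj e z) LinearMap.id)).mpr ?_ hf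
    rintro _ ⟨p, (hp : mdeg e p = z), rfl⟩
    show degProj e z (monomialBasis K n m p) = monomialBasis K n m p
    rw [degProj_monomialBasis, if_pos hp, monomialBasis_apply]

theorem degProj_of_mem {e : Fin m → ℕ} {z z' : ℕ} {f : FreeMod K n m}
    (hf : f ∈ degComp K n m e z') : degProj e z f = if z' = z then f else 0 := by
  split_ifs with hz
  · exact (isProj_degProj e z).map_id f (hz ▸ hf)
  · rw [degComp_eq_span] at hf
    refine (Submodule.span_le (p := LinearMap.ker (degProj e z))).mpr ?_ hf
    rintro _ ⟨p, (hp : mdeg e p = z'), rfl⟩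
    show degProj e z (monomialBasis K n m p) = 0
    rw [degProj_monomialBasis, if_neg (hp ▸ hz)]

theorem monomial_smul_mval (d : Fin n →₀ ℕ) (p : Fin m × (Fin n →₀ ℕ)) :
    monomial d (1 : K) • mval K p = mval K (p.1, d + p.2) := by
  ext j : 1
  rcases eq_or_ne j p.1 with rfl | h
  · simp [mval, monomial_mul]
  · simp [mval, Pi.single_eq_of_ne h]

theorem mdeg_add (e : Fin m → ℕ) (d : Fin n →₀ ℕ) (p : Fin m × (Fin n →₀ ℕ)) :
    mdeg e (p.1, d + p.2) = (d.sum fun _ k => k) + mdeg e p := by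
  unfold mdeg
  rw [Finsupp.sum_add_index' (fun _ => rfl) (fun _ _ _ => rfl)]
  dsimp only
  omega

theorem monomial_smul_mem_degComp {e : Fin m → ℕ} {c : ℕ} {h : FreeMod K n m}
    (hh : h ∈ degComp K n m e c) (d : Fin n →₀ ℕ) :
    monomial d (1 : K) • h ∈ degComp K n m e ((d.sum fun _ k => k) + c) := by
  induction hh using Submodule.span_induction with
  | mem x hx =>
    obtain ⟨p, rfl, rfl⟩ := hx
    rw [monomial_smul_mval, ← mdeg_add]
    exact Submodule.subset_span ⟨_, rfl, rfl⟩
  | zero => simp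
  | add x y _ _ hx hy => rw [smul_add]; exact Submodule.add_mem _ hx hy
  | smul a x _ hx => rw [smul_comm]; exact Submodule.smul_mem _ a hx

theorem map_degProj_cone {e : Fin m → ℕ} {c : ℕ} {h : FreeMod K n m}
    (hh : h ∈ degComp K n m e c) (u : Set (Fin n)) (z : ℕ) :
    (cone K h u).map (degProj e z) = Submodule.span K
      ((fun d => monomial d (1 : K) • h) ''
        {d : Fin n →₀ ℕ | (d.support : Set (Fin n)) ⊆ u ∧ (d.sum fun _ k => k) + c = z}) := by
  rw [cone, Submodule.map_span]
  apply le_antisymm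
  · rw [Submodule.span_le]
    rintro _ ⟨_, ⟨d, hd, rfl⟩, rfl⟩
    rw [degProj_of_mem (monomial_smul_mem_degComp hh d)]
    split_ifs with hz
    · exact Submodule.subset_span ⟨d, ⟨hd, hz⟩, rfl⟩
    · exact Submodule.zero_mem _
  · refine Submodule.span_mono ?_
    rintro _ ⟨d, ⟨hd, hz⟩, rfl⟩
    refine ⟨_, ⟨d, hd, rfl⟩, ?_⟩
    rw [degProj_of_mem (monomial_smul_mem_degComp hh d), if_pos hz]

theorem map_degProj_cone_le {e : Fin m → ℕ} {c : ℕ} {h : FreeMod K n m}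
    (hh : h ∈ degComp K n m e c) (u : Set (Fin n)) (z : ℕ) :
    (cone K h u).map (degProj e z) ≤ cone K h u := by
  rw [map_degProj_cone hh]
  exact Submodule.span_mono (by rintro _ ⟨d, ⟨hd, -⟩, rfl⟩; exact ⟨d, hd, rfl⟩)

theorem linearIndependent_monomial_smul {h : FreeMod K n m} (h0 : h ≠ 0) :
    LinearIndependent K fun d : Fin n →₀ ℕ => monomial d (1 : K) • h := by
  have hinj : Function.Injective
      ((LinearMap.toSpanSingleton (MvPolynomial (Fin n) K) _ h).restrictScalars K) :=
    smul_left_injective _ h0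
  simpa [Function.comp_def, MvPolynomial.coe_basisMonomials] using
    (MvPolynomial.basisMonomials (Fin n) K).linearIndependent.map' _ (LinearMap.ker_eq_bot.mpr hinj)

theorem map_degProj_cone_of_le {e : Fin m → ℕ} {c z : ℕ} {h : FreeMod K n m}
    (hh : h ∈ degComp K n m e c) (hcz : c ≤ z) (u : Finset (Fin n)) :
    (cone K h u).map (degProj e z) = Submodule.span K
      ((fun d => monomial d (1 : K) • h) '' (u.finsuppAntidiag (z - c) : Set (Fin n →₀ ℕ))) := by
  rw [map_degProj_cone hh]
  congr 2
  ext d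
  simp only [Set.mem_ofPred_eq, coe_subset, mem_coe, mem_finsuppAntidiag']
  exact ⟨fun ⟨hu, hz⟩ => ⟨by omega, hu⟩, fun ⟨hz, hu⟩ => ⟨hu, by omega⟩⟩

theorem finiteDimensional_map_degProj_cone {e : Fin m → ℕ} {c z : ℕ} {h : FreeMod K n m}
    (hh : h ∈ degComp K n m e c) (hcz : c ≤ z) (u : Finset (Fin n)) :
    FiniteDimensional K ((cone K h u).map (degProj e z)) := by
  rw [map_degProj_cone_of_le hh hcz]
  exact FiniteDimensional.span_of_finite K ((finite_toSet _).image _)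

theorem finrank_map_degProj_cone {e : Fin m → ℕ} {c z : ℕ} {h : FreeMod K n m} (h0 : h ≠ 0)
    (hh : h ∈ degComp K n m e c) (hcz : c ≤ z) (u : Finset (Fin n)) :
    finrank K ((cone K h u).map (degProj e z)) = (u.card + (z - c) - 1).choose (z - c) := by
  rw [map_degProj_cone_of_le hh hcz, Set.image_eq_range]
  refine (finrank_span_eq_card
    ((linearIndependent_monomial_smul h0).comp _ Subtype.val_injective)).trans ?_
  simp [card_finsuppAntidiag_nat_eq_choose]

theorem hilb_eq_sum_choose {e : Fin m → ℕ} {T : Submodule K (FreeMod K n m)}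
    {P : Finset (ConeData K n m)} (hdec : IsConeDecomp K e P T) {z : ℕ}
    (hdeg : ∀ c ∈ P, c.2.2 ≤ z) :
    hilb K e T z = ∑ c ∈ P, (c.2.1.card + (z - c.2.2) - 1).choose (z - c.2.2) := by
  obtain ⟨hpiv, hind, rfl⟩ := hdec
  have hle (c : P) : (cone K c.1.1 c.1.2.1).map (degProj e z) ≤ cone K c.1.1 c.1.2.1 :=
    map_degProj_cone_le (hpiv c c.2).2 _ z
  have hgraded :
      (⨆ c : P, cone K c.1.1 c.1.2.1).map (degProj e z) ≤ ⨆ c : P, cone K c.1.1 c.1.2.1 := by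
    rw [Submodule.map_iSup]
    exact iSup_mono hle
  have (c : P) := finiteDimensional_map_degProj_cone (hpiv c c.2).2 (hdeg c c.2) c.1.2.1
  rw [hilb, (isProj_degProj e z).inf_eq_map hgraded, Submodule.map_iSup,
    (hind.mono hle).finrank_iSup, ← sum_coe_sort P]
  exact sum_congr rfl fun c _ =>
    finrank_map_degProj_cone (hpiv c c.2).1 (hpiv c c.2).2 (hdeg c c.2) _

end

section

variable {K : Type*} [Field K] {n m q : ℕ} {P : Finset (ConeData K n m)}

theorem macaulay_antitone : Antitone (macaulay K q P) := fun _ _ hkl =>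
  max_le_max le_rfl (sup_mono (monotone_filter_right P fun _ _ hc => hkl.trans hc))

theorem deg_lt_macaulay {c : ConeData K n m} (hc : c ∈ P) {k : ℕ} (hk : k ≤ c.2.1.card) :
    c.2.2 < macaulay K q P k :=
  Nat.lt_of_succ_le <| (le_sup (f := fun c : ConeData K n m => c.2.2 + 1)
    (mem_filter.mpr ⟨hc, hk⟩)).trans (le_max_right _ _)

theorem exists_le_deg_of_lt_macaulay {k d : ℕ} (hqd : q ≤ d) (hd : d < macaulay K q P k) :
    ∃ c ∈ P, k ≤ c.2.1.card ∧ d ≤ c.2.2 := by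
  rcases lt_max_iff.mp hd with hq | hsup
  · omega
  · obtain ⟨c, hc, hdc⟩ := Finset.lt_sup_iff.mp hsup
    exact ⟨c, (mem_filter.mp hc).1, (mem_filter.mp hc).2, by omega⟩

theorem IsExact.injOn_deg (hex : IsExact K q P) :
    Set.InjOn (fun c : ConeData K n m => c.2.2) {c | c ∈ P ∧ 0 < c.2.1.card} :=
  fun c hc c' hc' hdeg => by_contra fun hne => hex.2 c hc.1 c' hc'.1 hc.2 hc'.2 hne hdeg

theorem IsExact.image_deg_filter_le (hex : IsExact K q P) {k : ℕ} (hk : 1 ≤ k) :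
    (P.filter fun c => k ≤ c.2.1.card).image (fun c => c.2.2) = Ico q (macaulay K q P k) := by
  ext d
  simp only [mem_image, mem_filter, mem_Ico]
  constructor
  · rintro ⟨c, ⟨hc, hkc⟩, rfl⟩
    exact ⟨hex.1.1 c hc (by omega), deg_lt_macaulay hc hkc⟩
  · rintro ⟨hqd, hd⟩
    obtain ⟨c, hc, hkc, hdc⟩ := exists_le_deg_of_lt_macaulay hqd hd
    obtain ⟨c', hc', rfl, hcc'⟩ := hex.1.2 c hc (by omega) d hqd hdc
    exact ⟨c', ⟨hc', hkc.trans hcc'⟩, rfl⟩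

theorem IsExact.image_deg_filter_eq (hex : IsExact K q P) {k : ℕ} (hk : 1 ≤ k) :
    (P.filter fun c => c.2.1.card = k).image (fun c => c.2.2) =
      Ico (macaulay K q P (k + 1)) (macaulay K q P k) := by
  have hsplit : (P.filter fun c => c.2.1.card = k).image (fun c => c.2.2) =
      (P.filter fun c => k ≤ c.2.1.card).image (fun c => c.2.2) \
        (P.filter fun c => k + 1 ≤ c.2.1.card).image (fun c => c.2.2) := by
    ext d
    simp only [mem_image, mem_filter, mem_sdiff, not_exists, not_and]
    constructor
    · rintro ⟨c, ⟨hc, rfl⟩, rfl⟩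
      refine ⟨⟨c, ⟨hc, le_rfl⟩, rfl⟩, fun c' ⟨hc', hkc'⟩ hdeg => ?_⟩
      have := hex.injOn_deg ⟨hc', by omega⟩ ⟨hc, by omega⟩ hdeg
      subst this
      omega
    · rintro ⟨⟨c, ⟨hc, hkc⟩, rfl⟩, hnot⟩
      exact ⟨c, ⟨hc, by by_contra h; exact hnot c ⟨hc, by omega⟩ rfl⟩, rfl⟩
  rw [hsplit, hex.image_deg_filter_le hk, hex.image_deg_filter_le (by omega), Ico_sdiff_Ico_left]
  exact congrArg (Ico · _) (max_eq_right (le_max_left _ _))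

theorem IsExact.sum_choose_filter_card_eq (hex : IsExact K q P) {z : ℕ} (hz : macaulay K q P 0 ≤ z)
    (j : ℕ) :
    ∑ c ∈ P.filter (fun c => c.2.1.card = j + 1),
        ((c.2.1.card + (z - c.2.2) - 1).choose (z - c.2.2) : ℤ) =
      (z - macaulay K q P (j + 2) + (j + 1)).choose (j + 1) -
        (z - macaulay K q P (j + 1) + (j + 1)).choose (j + 1) := by
  have hterm : ∀ c ∈ P.filter (fun c => c.2.1.card = j + 1),
      ((c.2.1.card + (z - c.2.2) - 1).choose (z - c.2.2) : ℤ) = (z - c.2.2 + j).choose j := by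
    intro c hc
    rw [(mem_filter.mp hc).2, show j + 1 + (z - c.2.2) - 1 = z - c.2.2 + j by omega,
      Nat.choose_symm_add]
  have hinj : Set.InjOn (fun c : ConeData K n m => c.2.2)
      ↑(P.filter fun c => c.2.1.card = j + 1) :=
    hex.injOn_deg.mono fun c hc => by
      obtain ⟨hcP, hcard⟩ := mem_filter.mp hc
      exact ⟨hcP, by omega⟩
  rw [sum_congr rfl hterm, ← sum_image (g := fun c : ConeData K n m => c.2.2)
    (f := fun d => ((z - d + j).choose j : ℤ)) hinj, hex.image_deg_filter_eq (by omega)]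
  exact sum_Ico_choose_eq j z (macaulay_antitone (by omega))
    ((macaulay_antitone (Nat.zero_le _)).trans hz)

theorem IsExact.sum_choose_eq (hex : IsExact K q P) {z : ℕ} (hz : macaulay K q P 0 ≤ z) :
    ∑ c ∈ P, ((c.2.1.card + (z - c.2.2) - 1).choose (z - c.2.2) : ℤ) =
      ((z - macaulay K q P (n + 1) + n).choose n : ℤ) - 1 -
        ∑ i ∈ Icc 1 n, ((z - macaulay K q P i + i - 1).choose i : ℤ) := by
  have hdim : ∀ c ∈ P, c.2.1.card ∈ range (n + 1) := fun c _ =>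
    mem_range.mpr (Nat.lt_succ_of_le ((card_le_univ _).trans_eq (Fintype.card_fin n)))
  have hzero : ∑ c ∈ P.filter (fun c => c.2.1.card = 0),
      ((c.2.1.card + (z - c.2.2) - 1).choose (z - c.2.2) : ℤ) = 0 := by
    refine sum_eq_zero fun c hc => ?_
    have := deg_lt_macaulay (q := q) (mem_filter.mp hc).1 (Nat.zero_le _)
    rw [(mem_filter.mp hc).2, Nat.choose_eq_zero_of_lt (by omega), Nat.cast_zero]
  rw [← sum_fiberwise_of_maps_to hdim, sum_range_succ', hzero, add_zero,
    sum_congr rfl fun j _ => hex.sum_choose_filter_card_eq hz j]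
  exact sum_range_choose_telescope _ z n

end

/-- For a `q`-exact cone decomposition `P` of a graded subspace `T` with
Macaulay constants `b₀,…,b_{n+1}`, for all `z ≥ b₀`:
`HF_T(z) = binom(z − b_{n+1} + n, n) − 1 − ∑_{i=1}^n binom(z − b_i + i − 1, i)`. -/
theorem stmt_7 (K : Type*) [Field K] (n m q : ℕ) (e : Fin m → ℕ)
    (T : Submodule K (FreeMod K n m)) (P : Finset (ConeData K n m))
    (hdec : IsConeDecomp K e P T) (hex : IsExact K q P) :
    ∀ z : ℕ, macaulay K q P 0 ≤ z →
      (hilb K e T z : ℤ) =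
        ((z - macaulay K q P (n + 1) + n).choose n : ℤ) - 1 -
          ∑ i ∈ Finset.Icc 1 n, ((z - macaulay K q P i + i - 1).choose i : ℤ) := by
  intro z hz
  have hdeg : ∀ c ∈ P, c.2.2 ≤ z := fun c hc =>
    (deg_lt_macaulay (q := q) hc (Nat.zero_le _)).le.trans hz
  rw [hilb_eq_sum_choose hdec hdeg, Nat.cast_sum]
  exact hex.sum_choose_eq hz
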